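/- Let M ∈ ℕ. For each n, let a₀ⁿ, …, a_Mⁿ be real numbers and let 0 = τ₀ⁿ ≤ τ₁ⁿ ≤ … ≤ τ_{M+1}ⁿ = 1 be real numbers, and suppose a_jⁿ → a_j and τ_jⁿ → τ_j as n → ∞ for each 0 ≤ j ≤ M+1 (with 0 = τ₀ ≤ … ≤ τ_{M+1} = 1). Let f_n : [0,1] → ℝ converge uniformly on [0,1] to a continuous function f : [0,1] → ℝ. Define F_n(t) = Σ_{j=0}^M a_jⁿ ( f_n(min(t, τ_{j+1}ⁿ)) − f_n(min(t, τ_jⁿ)) ) and F(t) = Σ_{j=0}^M a_j ( f(min(t, τ_{j+1})) − f(min(t, τ_j)) ). Then sup_{t ∈ [0,1]} |F_n(t) − F(t)| → 0 as n → ∞. -/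

import Mathlib

/-!
Each summand is `aⱼⁿ` times the increment of `fₙ` stopped at `τⱼ₊₁ⁿ` and `τⱼⁿ`. Stopping at a
convergent time converges uniformly on `[0,1]`, because `σ ↦ min t σ` is 1-Lipschitz and the limit
`f` is uniformly continuous there. Multiplying by a convergent scalar sequence preserves uniform
convergence since the limit increment is bounded and multiplication is uniformly continuous on a
compact neighbourhood of its range; finite sums preserve uniform convergence.
-/

open Set Filter Topology

theorem Set.mapsTo_min_Icc {α : Type*} [LinearOrder α] {a b c : α} (hc : a ≤ c) :
    MapsTo (fun t => min t c) (Icc a b) (Icc a b) :=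
  fun _ ht => ⟨le_min ht.1 hc, min_le_of_left_le ht.2⟩

section UniformConvergence

variable {ι α β γ : Type*} {p : Filter ι}

theorem TendstoUniformlyOn.prodMk' [UniformSpace β] [UniformSpace γ] {s : Set α}
    {F : ι → α → β} {f : α → β} {G : ι → α → γ} {g : α → γ}
    (hF : TendstoUniformlyOn F f p s) (hG : TendstoUniformlyOn G g p s) :
    TendstoUniformlyOn (fun n x => (F n x, G n x)) (fun x => (f x, g x)) p s :=
  fun u hu => tendsto_diag.eventually (hF.prodMk hG u hu)

theorem tendstoUniformlyOn_finsetSum {κ : Type*} [AddCommGroup β] [UniformSpace β]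
    [IsUniformAddGroup β] {s : Set α} (S : Finset κ) {F : κ → ι → α → β} {f : κ → α → β}
    (h : ∀ k ∈ S, TendstoUniformlyOn (F k) (f k) p s) :
    TendstoUniformlyOn (fun n x => ∑ k ∈ S, F k n x) (fun x => ∑ k ∈ S, f k x) p s := by
  classical
  induction S using Finset.induction_on with
  | empty => simpa using tendsto_const_nhds.tendstoUniformlyOn_const s
  | insert k S hk ih =>
    simp only [Finset.sum_insert hk]
    exact (h k (S.mem_insert_self k)).add (ih fun i hi => h i (Finset.mem_insert_of_mem hi))

theorem TendstoUniformlyOn.comp_tendstoUniformlyOn [UniformSpace β] [UniformSpace γ]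
    {s : Set β} {t : Set α} {F : ι → β → γ} {f : β → γ} {Φ : ι → α → β} {φ : α → β}
    (hF : TendstoUniformlyOn F f p s) (hf : UniformContinuousOn f s)
    (hΦ : TendstoUniformlyOn Φ φ p t) (hΦs : ∀ᶠ n in p, ∀ x ∈ t, Φ n x ∈ s)
    (hφs : MapsTo φ t s) :
    TendstoUniformlyOn (fun n x => F n (Φ n x)) (fun x => f (φ x)) p t := by
  intro u hu
  obtain ⟨v, hv, hvu⟩ := comp_mem_uniformity_sets hu
  filter_upwards [hf.comp_tendstoUniformlyOn_eventually hΦs hφs hΦ v hv, hF v hv, hΦs]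
    with n hfΦ hFΦ hΦn x hx
  exact hvu (SetRel.prodMk_mem_comp (hfΦ x hx) (hFΦ _ (hΦn x hx)))

theorem TendstoUniformlyOn.comp_continuous_of_isBounded [PseudoMetricSpace β] [ProperSpace β]
    [UniformSpace γ] {s : Set α} {F : ι → α → β} {f : α → β} {g : β → γ}
    (hg : Continuous g) (hF : TendstoUniformlyOn F f p s) (hf : Bornology.IsBounded (f '' s)) :
    TendstoUniformlyOn (fun n x => g (F n x)) (fun x => g (f x)) p s := by
  set K := Metric.cthickening 1 (f '' s)
  have hK : IsCompact K := Metric.isCompact_of_isClosed_isBounded Metric.isClosed_cthickening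
    hf.cthickening
  have hFK : ∀ᶠ n in p, ∀ x ∈ s, F n x ∈ K := by
    filter_upwards [Metric.tendstoUniformlyOn_iff.1 hF 1 one_pos] with n hn x hx
    exact Metric.mem_cthickening_of_dist_le _ _ _ _ (mem_image_of_mem f hx)
      (dist_comm (f x) _ ▸ (hn x hx).le)
  exact (hK.uniformContinuousOn_of_continuous hg.continuousOn).comp_tendstoUniformlyOn_eventually
    hFK (fun x hx => Metric.self_subset_cthickening _ (mem_image_of_mem f hx)) hF

theorem TendstoUniformlyOn.const_mul_of_isBounded {R : Type*} [NormedRing R] [ProperSpace R]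
    {s : Set α} {c : ι → R} {c₀ : R} {G : ι → α → R} {g : α → R}
    (hG : TendstoUniformlyOn G g p s) (hc : Tendsto c p (𝓝 c₀))
    (hg : Bornology.IsBounded (g '' s)) :
    TendstoUniformlyOn (fun n x => c n * G n x) (fun x => c₀ * g x) p s := by
  refine ((hc.tendstoUniformlyOn_const s).prodMk' hG).comp_continuous_of_isBounded
    (g := fun q : R × R => q.1 * q.2) continuous_mul ?_
  refine ((Bornology.isBounded_singleton (x := c₀)).prod hg).subset ?_
  rintro _ ⟨x, hx, rfl⟩
  exact ⟨rfl, mem_image_of_mem g hx⟩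

theorem Filter.Tendsto.tendstoUniformly_min {σ : ι → ℝ} {σ₀ : ℝ} (hσ : Tendsto σ p (𝓝 σ₀)) :
    TendstoUniformly (fun n (t : ℝ) => min t (σ n)) (fun t => min t σ₀) p := by
  rw [Metric.tendstoUniformly_iff]
  intro ε hε
  filter_upwards [Metric.tendsto_nhds.1 hσ ε hε] with n hn t
  calc dist (min t σ₀) (min t (σ n)) ≤ max |t - t| |σ₀ - σ n| := abs_min_sub_min_le_max _ _ _ _
    _ = dist (σ n) σ₀ := by simp [Real.dist_eq, abs_sub_comm]
    _ < ε := hn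

theorem TendstoUniformlyOn.comp_min {f : ι → ℝ → ℝ} {f₀ : ℝ → ℝ} {a b : ℝ} [p.NeBot]
    (hf : TendstoUniformlyOn f f₀ p (Icc a b)) (hf₀ : ContinuousOn f₀ (Icc a b))
    {σ : ι → ℝ} {σ₀ : ℝ} (hσ : Tendsto σ p (𝓝 σ₀)) (hσa : ∀ᶠ n in p, a ≤ σ n) :
    TendstoUniformlyOn (fun n t => f n (min t (σ n))) (fun t => f₀ (min t σ₀)) p (Icc a b) :=
  hf.comp_tendstoUniformlyOn (isCompact_Icc.uniformContinuousOn_of_continuous hf₀)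
    hσ.tendstoUniformly_min.tendstoUniformlyOn
    (hσa.mono fun _ hn _ hx => mapsTo_min_Icc hn hx) (mapsTo_min_Icc (ge_of_tendsto hσ hσa))

end UniformConvergence

theorem stmt11_general (M : ℕ) (a : ℕ → ℕ → ℝ) (τ : ℕ → ℕ → ℝ) (aL τL : ℕ → ℝ)
    (hτ0 : ∀ n, τ n 0 = 0)
    (hτmono : ∀ n, ∀ j ≤ M, τ n j ≤ τ n (j + 1))
    (ha : ∀ j ≤ M, Tendsto (fun n => a n j) atTop (nhds (aL j)))
    (hτconv : ∀ j ≤ M + 1, Tendsto (fun n => τ n j) atTop (nhds (τL j)))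
    (f : ℕ → ℝ → ℝ) (fL : ℝ → ℝ)
    (hf : TendstoUniformlyOn f fL atTop (Icc (0:ℝ) 1))
    (hfL : ContinuousOn fL (Icc (0:ℝ) 1)) :
    TendstoUniformlyOn
      (fun n t => ∑ j ∈ Finset.range (M + 1),
        a n j * (f n (min t (τ n (j + 1))) - f n (min t (τ n j))))
      (fun t => ∑ j ∈ Finset.range (M + 1),
        aL j * (fL (min t (τL (j + 1))) - fL (min t (τL j))))
      atTop (Icc (0:ℝ) 1) := by
  have hτ_nonneg : ∀ n, ∀ j ≤ M + 1, 0 ≤ τ n j := by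
    intro n j hj
    induction j with
    | zero => exact (hτ0 n).ge
    | succ j ih => exact (ih (by omega)).trans (hτmono n j (by omega))
  have hτL_nonneg : ∀ j ≤ M + 1, 0 ≤ τL j := fun j hj =>
    ge_of_tendsto' (hτconv j hj) fun n => hτ_nonneg n j hj
  have hstopped : ∀ j ≤ M + 1, TendstoUniformlyOn (fun n t => f n (min t (τ n j)))
      (fun t => fL (min t (τL j))) atTop (Icc 0 1) := fun j hj =>
    hf.comp_min hfL (hτconv j hj) (.of_forall fun n => hτ_nonneg n j hj)
  have hstopped_cont : ∀ j ≤ M + 1, ContinuousOn (fun t => fL (min t (τL j))) (Icc 0 1) :=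
    fun j hj => hfL.comp (continuous_id.min continuous_const).continuousOn
      (mapsTo_min_Icc (hτL_nonneg j hj))
  refine tendstoUniformlyOn_finsetSum _ fun j hj => ?_
  have hjM : j ≤ M := Nat.lt_succ_iff.mp (Finset.mem_range.mp hj)
  refine ((hstopped (j + 1) (by omega)).sub (hstopped j (by omega))).const_mul_of_isBounded
    (ha j hjM) ?_
  exact (isCompact_Icc.image_of_continuousOn
    ((hstopped_cont (j + 1) (by omega)).sub (hstopped_cont j (by omega)))).isBounded

theorem stmt11 (M : ℕ) (a : ℕ → ℕ → ℝ) (τ : ℕ → ℕ → ℝ) (aL τL : ℕ → ℝ)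
    (hτ0 : ∀ n, τ n 0 = 0) (hτlast : ∀ n, τ n (M + 1) = 1)
    (hτmono : ∀ n, ∀ j ≤ M, τ n j ≤ τ n (j + 1))
    (hτL0 : τL 0 = 0) (hτLlast : τL (M + 1) = 1)
    (hτLmono : ∀ j ≤ M, τL j ≤ τL (j + 1))
    (ha : ∀ j ≤ M, Tendsto (fun n => a n j) atTop (nhds (aL j)))
    (hτconv : ∀ j ≤ M + 1, Tendsto (fun n => τ n j) atTop (nhds (τL j)))
    (f : ℕ → ℝ → ℝ) (fL : ℝ → ℝ)
    (hf : TendstoUniformlyOn f fL atTop (Icc (0:ℝ) 1))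
    (hfL : ContinuousOn fL (Icc (0:ℝ) 1)) :
    TendstoUniformlyOn
      (fun n t => ∑ j ∈ Finset.range (M + 1),
        a n j * (f n (min t (τ n (j + 1))) - f n (min t (τ n j))))
      (fun t => ∑ j ∈ Finset.range (M + 1),
        aL j * (fL (min t (τL (j + 1))) - fL (min t (τL j))))
      atTop (Icc (0:ℝ) 1) :=
  stmt11_general M a τ aL τL hτ0 hτmono ha hτconv f fL hf hfL
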